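/- arXiv:2503.23591 — 7 statements merged into one kernel-verified Lean document; each statement's English description precedes it below -/
import Mathlib

section
/- For integers k ≥ 3 and ℓ ≥ 3k - 1, there is a homomorphism from C_ℓ^(k)- to C_{ℓ-k}^(k)-, where C_m^(k)- denotes the k-uniform tight cycle of length m with one edge removed. Explicitly, if the vertices of C_{ℓ-k}^(k)- are v_1, ..., v_{ℓ-k} in cyclic order with missing edge v_{ℓ-k} v_1 ... v_{k-1}, then the cyclic vertex sequence v_1, v_2, ..., v_k, v_1, v_2, ..., v_{ℓ-k} gives a homomorphic copy of C_ℓ^(k)- with missing edge v_{ℓ-k} v_1 ... v_{k-1}. -/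
/-- The edge of the `k`-uniform tight cycle on `ZMod m` starting at vertex `i`. -/
def tightWindow (m k : ℕ) (i : ZMod m) : Finset (ZMod m) :=
  (Finset.range k).image fun j : ℕ => i + (j : ZMod m)

/-- The `k`-uniform tight cycle of length `m` minus one edge, on vertex set `ZMod m`
(vertices `0, 1, ..., m-1` in cyclic order): the edges are the windows starting at
`0, 1, ..., m-2`, the missing edge being the window starting at `m-1`
(i.e. `{v_m, v_1, ..., v_{k-1}}` in 1-based labelling). -/
def tightCycleMinus (m k : ℕ) : Finset (Finset (ZMod m)) :=
  (Finset.range (m - 1)).image fun i : ℕ => tightWindow m k (i : ZMod m)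

lemma range_image_addmod (i k : ℕ) (hik : i < k) :
    (Finset.range k).image (fun j => (i + j) % k) = Finset.range k := by
  ext m
  simp only [Finset.mem_image, Finset.mem_range]
  constructor
  · rintro ⟨j, hj, rfl⟩
    exact Nat.mod_lt _ (by omega)
  · intro hm
    by_cases h : i ≤ m
    · exact ⟨m - i, by omega, by rw [show i + (m - i) = m by omega, Nat.mod_eq_of_lt hm]⟩
    · refine ⟨m + k - i, by omega, ?_⟩
      rw [show i + (m + k - i) = m + k by omega, Nat.add_mod_right, Nat.mod_eq_of_lt hm]

/-- For `k ≥ 3` and `ℓ ≥ 3k - 1`, there is a homomorphism from `C_ℓ^(k)-` to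
`C_{ℓ-k}^(k)-`: a map on vertices sending every edge of `C_ℓ^(k)-` to an edge
of `C_{ℓ-k}^(k)-` (in particular injectively on each edge, as edges of both
`k`-graphs are `k`-element sets). -/
theorem tight_cycle_minus_hom (k ℓ : ℕ) (hk : 3 ≤ k) (hℓ : 3 * k - 1 ≤ ℓ) :
    ∃ g : ZMod ℓ → ZMod (ℓ - k),
      ∀ e ∈ tightCycleMinus ℓ k, e.image g ∈ tightCycleMinus (ℓ - k) k := by
  have hℓ2 : 2 * k + 2 ≤ ℓ := by omega
  haveI : NeZero ℓ := ⟨by omega⟩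
  haveI : NeZero (ℓ - k) := ⟨by omega⟩
  set G : ZMod ℓ → ZMod (ℓ - k) :=
    fun x => if x.val < k then (x.val : ZMod (ℓ - k)) else ((x.val - k : ℕ) : ZMod (ℓ - k))
    with hG
  refine ⟨G, ?_⟩
  intro e he
  simp only [tightCycleMinus, Finset.mem_image, Finset.mem_range] at he ⊢
  obtain ⟨i, hi, rfl⟩ := he
  have himg : (tightWindow ℓ k (i : ZMod ℓ)).image G
      = (Finset.range k).image (fun j : ℕ => G (((i + j : ℕ) : ZMod ℓ))) := by
    rw [tightWindow, Finset.image_image]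
    apply Finset.image_congr
    intro j _
    simp [Function.comp, Nat.cast_add]
  by_cases hik : i < k
  · -- image is the window starting at 0
    refine ⟨0, by omega, ?_⟩
    rw [himg]
    have hstep : ∀ j ∈ Finset.range k,
        G (((i + j : ℕ) : ZMod ℓ)) = (((i + j) % k : ℕ) : ZMod (ℓ - k)) := by
      intro j hj
      rw [Finset.mem_range] at hj
      have hval : (((i + j : ℕ) : ZMod ℓ)).val = i + j :=
        ZMod.val_cast_of_lt (by omega)
      rw [hG]
      simp only [hval]
      by_cases h : i + j < k
      · rw [if_pos h, Nat.mod_eq_of_lt h]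
      · rw [if_neg h, Nat.mod_eq_sub_mod (by omega), Nat.mod_eq_of_lt (by omega)]
    rw [Finset.image_congr hstep]
    have : (fun j : ℕ => (((i + j) % k : ℕ) : ZMod (ℓ - k)))
        = (fun m : ℕ => (m : ZMod (ℓ - k))) ∘ (fun j => (i + j) % k) := rfl
    rw [this, ← Finset.image_image, range_image_addmod i k hik]
    rw [tightWindow]
    apply Finset.image_congr
    intro j _
    simp
  · -- image is the window starting at i - k
    refine ⟨i - k, by omega, ?_⟩
    rw [himg, tightWindow]
    symm
    apply Finset.image_congr
    intro j hj
    simp only [Finset.mem_coe, Finset.mem_range] at hj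
    rw [hG]
    by_cases h : i + j < ℓ
    · have hval : (((i + j : ℕ) : ZMod ℓ)).val = i + j :=
        ZMod.val_cast_of_lt h
      simp only [hval, if_neg (by omega : ¬ i + j < k)]
      rw [show i + j - k = (i - k) + j by omega]
      push_cast
      ring
    · have hcast : ((i + j : ℕ) : ZMod ℓ) = ((i + j - ℓ : ℕ) : ZMod ℓ) := by
        conv_lhs => rw [show (i + j : ℕ) = (i + j - ℓ) + ℓ by omega]
        push_cast
        rw [ZMod.natCast_self, add_zero]
      have hval : (((i + j : ℕ) : ZMod ℓ)).val = i + j - ℓ := by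
        rw [hcast]; exact ZMod.val_cast_of_lt (by omega)
      simp only [hval, if_pos (by omega : i + j - ℓ < k)]
      have : ((i - k : ℕ) : ZMod (ℓ - k)) + (j : ZMod (ℓ - k))
          = (((i + j - ℓ) + (ℓ - k) : ℕ) : ZMod (ℓ - k)) := by
        rw [show (i + j - ℓ) + (ℓ - k) = (i - k) + j by omega]
        push_cast; ring
      rw [this]
      push_cast
      rw [ZMod.natCast_self, add_zero]
end

section
/- Let k ≥ 3 and ℓ ≥ k + 2 with ℓ not congruent to 0, 1, or −1 modulo k, and let d = gcd(k, ℓ) with d > 1. Write ℓ = dh. Suppose f : Z/ℓZ → Z/mZ satisfies f(i) = f(i + k) for all i not congruent to 0 or −1 modulo ℓ. Then for every i with −1 ≤ i ≤ d − 2 and every 1 ≤ j ≤ h − 1, we have f(i + jk) = f(i); consequently f(i) = f(j) whenever i ≡ j (mod d). -/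
/-- Let `k ≥ 3`, `ℓ ≥ k + 2` with `ℓ ≢ 0, ±1 (mod k)`, and let `d = gcd(k, ℓ) > 1`,
`ℓ = d * h`. If `f : ZMod ℓ → ZMod m` satisfies `f(i) = f(i + k)` for all residues
`i ≢ 0, -1 (mod ℓ)`, then `f(i + j*k) = f(i)` for all integers `-1 ≤ i ≤ d - 2` and
`1 ≤ j ≤ h - 1`; consequently `f(i) = f(j)` whenever `i ≡ j (mod d)`. -/
theorem recurrence_constant_on_residue_classes (k ℓ m : ℕ)
    (hk : 3 ≤ k) (hℓ : k + 2 ≤ ℓ)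
    (h0 : ¬ (ℓ % k = 0)) (h1 : ¬ (ℓ % k = 1)) (h2 : ¬ (ℓ % k = k - 1))
    (d h : ℕ) (hd : d = Nat.gcd k ℓ) (hd1 : 1 < d) (hh : ℓ = d * h)
    (f : ZMod ℓ → ZMod m)
    (hf : ∀ i : ZMod ℓ, i ≠ 0 → i ≠ -1 → f i = f (i + (k : ZMod ℓ))) :
    (∀ i : ℤ, -1 ≤ i → i ≤ (d : ℤ) - 2 → ∀ j : ℕ, 1 ≤ j → j ≤ h - 1 →
        f ((i : ZMod ℓ) + (j : ZMod ℓ) * (k : ZMod ℓ)) = f (i : ZMod ℓ)) ∧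
    (∀ x y : ℤ, (d : ℤ) ∣ (x - y) → f (x : ZMod ℓ) = f (y : ZMod ℓ)) := by
  have hℓpos : 0 < ℓ := by omega
  have hkpos : 0 < k := by omega
  have hdk : d ∣ k := hd ▸ Nat.gcd_dvd_left k ℓ
  have hdl : d ∣ ℓ := hd ▸ Nat.gcd_dvd_right k ℓ
  obtain ⟨k', hk'⟩ := hdk
  have hdpos : 0 < d := by omega
  have hkd : d ≤ k := Nat.le_of_dvd hkpos ⟨k', hk'⟩
  have hh2 : 2 ≤ h := by nlinarith [hh]
  have hcop : Nat.Coprime h k' := by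
    have hg : 0 < Nat.gcd k ℓ := Nat.gcd_pos_of_pos_left ℓ hkpos
    have hco := Nat.coprime_div_gcd_div_gcd (m := k) (n := ℓ) hg
    have e1 : k / Nat.gcd k ℓ = k' := by
      rw [← hd, hk']; exact Nat.mul_div_cancel_left k' hdpos
    have e2 : ℓ / Nat.gcd k ℓ = h := by
      rw [← hd, hh]; exact Nat.mul_div_cancel_left h hdpos
    rw [e1, e2] at hco
    exact hco.symm
  have hlhk : ℓ ∣ h * k := ⟨k', by rw [hk', hh]; ring⟩
  have hddvdk : (d : ℤ) ∣ (k : ℤ) := ⟨(k' : ℤ), by exact_mod_cast hk'⟩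
  have hddvdl : (d : ℤ) ∣ (ℓ : ℤ) := ⟨(h : ℤ), by exact_mod_cast hh⟩
  -- ℓ never divides t*k for 1 ≤ t ≤ h-1
  have hndvd : ∀ t : ℕ, 1 ≤ t → t ≤ h - 1 → ¬ ((ℓ : ℤ) ∣ (t : ℤ) * k) := by
    intro t ht1 ht2 hdvd
    have hdvd' : ℓ ∣ t * k := by exact_mod_cast hdvd
    rw [hh, hk'] at hdvd'
    have h3 : h ∣ t * k' := (Nat.mul_dvd_mul_iff_left hdpos).mp
      (by rw [show d * (t * k') = t * (d * k') by ring]; exact hdvd')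
    have h4 : h ∣ t := Nat.Coprime.dvd_of_dvd_mul_right hcop h3
    have := Nat.le_of_dvd (by omega) h4
    omega
  -- key: i + t*k avoids 0 and -1 in ZMod ℓ
  have key : ∀ i : ℤ, -1 ≤ i → i ≤ (d : ℤ) - 2 → ∀ t : ℕ, 1 ≤ t → t ≤ h - 1 →
      ((i : ZMod ℓ) + (t : ZMod ℓ) * (k : ZMod ℓ) ≠ 0 ∧
       (i : ZMod ℓ) + (t : ZMod ℓ) * (k : ZMod ℓ) ≠ -1) := by
    intro i hi1 hi2 t ht1 ht2
    constructor
    · intro h0'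
      have hcast : ((i + t * k : ℤ) : ZMod ℓ) = 0 := by push_cast; exact h0'
      have hdvd : (ℓ : ℤ) ∣ i + t * k := (ZMod.intCast_zmod_eq_zero_iff_dvd _ _).mp hcast
      have hdtk : (d : ℤ) ∣ (t : ℤ) * k := Dvd.dvd.mul_left hddvdk t
      have hdi : (d : ℤ) ∣ i := by
        have h5 : (d : ℤ) ∣ i + t * k := dvd_trans hddvdl hdvd
        simpa using dvd_sub h5 hdtk
      have hi0 : i = 0 := Int.eq_zero_of_abs_lt_dvd hdi (by rw [abs_lt]; omega)
      subst hi0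
      exact hndvd t ht1 ht2 (by simpa using hdvd)
    · intro h1'
      have hcast : ((i + 1 + t * k : ℤ) : ZMod ℓ) = 0 := by
        push_cast
        rw [show (i : ZMod ℓ) + 1 + t * k = ((i : ZMod ℓ) + t * k) + 1 by ring, h1']
        ring
      have hdvd : (ℓ : ℤ) ∣ i + 1 + t * k := (ZMod.intCast_zmod_eq_zero_iff_dvd _ _).mp hcast
      have hdtk : (d : ℤ) ∣ (t : ℤ) * k := Dvd.dvd.mul_left hddvdk t
      have hdi : (d : ℤ) ∣ i + 1 := by
        have h5 : (d : ℤ) ∣ i + 1 + t * k := dvd_trans hddvdl hdvd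
        simpa using dvd_sub h5 hdtk
      have hi0 : i + 1 = 0 := Int.eq_zero_of_abs_lt_dvd hdi (by rw [abs_lt]; omega)
      have : i = -1 := by omega
      subst this
      exact hndvd t ht1 ht2 (by simpa using hdvd)
  -- h * k = 0 in ZMod ℓ
  have hhk0 : ((h : ℕ) : ZMod ℓ) * (k : ZMod ℓ) = 0 := by
    have : ((h * k : ℕ) : ZMod ℓ) = 0 := (ZMod.natCast_eq_zero_iff _ _).mpr hlhk
    push_cast at this
    exact this
  -- Part 1
  have part1 : ∀ i : ℤ, -1 ≤ i → i ≤ (d : ℤ) - 2 → ∀ j : ℕ, 1 ≤ j → j ≤ h - 1 →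
      f ((i : ZMod ℓ) + (j : ZMod ℓ) * (k : ZMod ℓ)) = f (i : ZMod ℓ) := by
    intro i hi1 hi2 j hj1 hj2
    have step : ∀ s : ℕ, j + s ≤ h →
        f ((i : ZMod ℓ) + (j : ZMod ℓ) * k) = f ((i : ZMod ℓ) + ((j + s : ℕ) : ZMod ℓ) * k) := by
      intro s
      induction s with
      | zero => intro _; norm_num
      | succ n ih =>
        intro hle
        rw [ih (by omega)]
        have hne := key i hi1 hi2 (j + n) (by omega) (by omega)
        have heq := hf _ hne.1 hne.2
        rw [heq]
        congr 1
        push_cast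
        ring
    have hfin := step (h - j) (by omega)
    rw [show j + (h - j) = h by omega] at hfin
    rw [hhk0] at hfin
    simpa using hfin
  refine ⟨part1, ?_⟩
  -- reduction: every x has f(x) = f(r) where r = (x+1) % d - 1
  have hred : ∀ x : ℤ, f ((x : ZMod ℓ)) = f ((((x + 1) % (d : ℤ) - 1 : ℤ) : ZMod ℓ)) := by
    intro x
    set r : ℤ := (x + 1) % (d : ℤ) - 1 with hr
    have hdz : (0 : ℤ) < (d : ℤ) := by exact_mod_cast hdpos
    have hr1 : -1 ≤ r := by
      have := Int.emod_nonneg (x + 1) (by omega : (d : ℤ) ≠ 0)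
      omega
    have hr2 : r ≤ (d : ℤ) - 2 := by
      have := Int.emod_lt_of_pos (x + 1) hdz
      omega
    have hdvdxr : (d : ℤ) ∣ x - r := by
      have := Int.emod_add_mul_ediv (x + 1) (d : ℤ)
      exact ⟨(x + 1) / d, by omega⟩
    obtain ⟨s, hs⟩ := hdvdxr
    have hbez : (d : ℤ) = k * Nat.gcdA k ℓ + ℓ * Nat.gcdB k ℓ := by
      rw [hd]; exact Nat.gcd_eq_gcd_ab k ℓ
    set a : ℤ := Nat.gcdA k ℓ
    set b : ℤ := Nat.gcdB k ℓ
    set j0 : ℤ := a * s with hj0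
    have hhz : (0 : ℤ) < (h : ℤ) := by exact_mod_cast (by omega : 0 < h)
    set j : ℕ := (j0 % (h : ℤ)).toNat with hjdef
    have hjlt : (j : ℤ) = j0 % (h : ℤ) := by
      rw [hjdef]
      exact Int.toNat_of_nonneg (Int.emod_nonneg j0 (by omega))
    have hjh : (j : ℤ) < h := by
      rw [hjlt]; exact Int.emod_lt_of_pos j0 hhz
    -- x ≡ r + j*k mod ℓ
    have hxr : (x : ZMod ℓ) = (r : ZMod ℓ) + (j : ZMod ℓ) * k := by
      have hdvd : (ℓ : ℤ) ∣ x - (r + j * k) := by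
        have hkh : (ℓ : ℤ) ∣ (k : ℤ) * h := ⟨(k' : ℤ), by
          push_cast [hk', hh]; ring⟩
        have e1 : x - r = k * j0 + ℓ * (b * s) := by
          rw [hs, hbez]; ring
        have e2 : j0 = (h : ℤ) * (j0 / h) + j := by
          rw [hjlt]; linarith [Int.emod_add_mul_ediv j0 (h:ℤ)]
        have : x - (r + j * k) = k * h * (j0 / h) + ℓ * (b * s) := by
          rw [show x - (r + (j:ℤ) * k) = (x - r) - j * k by ring, e1]
          linear_combination (k:ℤ) * e2
        rw [this]
        exact dvd_add (Dvd.dvd.mul_right hkh _) (Dvd.dvd.mul_right dvd_rfl _)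
      have : ((x - (r + j * k) : ℤ) : ZMod ℓ) = 0 :=
        (ZMod.intCast_zmod_eq_zero_iff_dvd _ _).mpr hdvd
      push_cast at this
      linear_combination this
    rcases Nat.eq_zero_or_pos j with hj0' | hj0'
    · rw [hxr, hj0']
      norm_num
    · rw [hxr]
      exact part1 r hr1 hr2 j hj0' (by omega)
  intro x y hxy
  rw [hred x, hred y]
  have hmod : (x + 1) % (d : ℤ) = (y + 1) % (d : ℤ) := by
    have : (x + 1) ≡ (y + 1) [ZMOD (d : ℤ)] := by
      apply Int.ModEq.add_right
      exact Int.modEq_iff_dvd.mpr (by simpa using (dvd_neg.mpr hxy))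
    exact this
  rw [hmod]
end

section
/- Let k ≥ 3 and ℓ ≥ k + 2 with gcd(k, ℓ) > 1 and k not dividing ℓ. Set d = gcd(k, ℓ) and m = k/d (so m > 1). Then there is no copy of C_ℓ^(k)- in the k-graph G_{m,N} for any N, where G_{m,N} has vertex set partitioned into m classes each of size N with class-function f, and edges exactly the k-sets whose f-values sum to 1 in Z/mZ. -/
/-!
Write `F = Prod.fst ∘ g` for the colour classes along the cycle. Two consecutive edges of the
cycle share `k - 1` vertices, so equating their sums gives `F (x + k) = F x` for every vertex
`x` except `-2` and `-1`. These two vertices lie in different cosets of the subgroup generated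
by `k` in `ℤ/ℓ`, since `gcd(k, ℓ) > 1`; on the `+k`-cycle through either of them only one
equation is missing, and a cycle with one missing link still forces `F` to be constant on it.
Hence `F` is `k`-periodic, so `d`-periodic with `d = gcd(k, ℓ)`, and the edge starting at `0`,
made of `m` full periods, has sum `m • (…) = 0 ≠ 1` in `ℤ/m` unless `m = 1`, i.e. `k ∣ ℓ`.
-/

open Finset Function

theorem apply_eq_of_sum_range_shift_eq {M : Type*} [AddCancelCommMonoid M] (f : ℕ → M) (k : ℕ)
    (h : ∑ j ∈ range k, f (j + 1) = ∑ j ∈ range k, f j) : f k = f 0 := by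
  have hsum := (sum_range_succ f k).symm.trans (sum_range_succ' f k)
  rw [h] at hsum
  exact add_left_cancel hsum

theorem apply_add_eq_of_sum_range_eq {M : Type*} [AddCancelCommMonoid M] {ℓ k : ℕ}
    {f : ZMod ℓ → M} {s : M} (h : ∀ x : ZMod ℓ, x ≠ -1 → ∑ j ∈ range k, f (x + j) = s)
    (x : ZMod ℓ) (hx2 : x ≠ -2) (hx1 : x ≠ -1) : f (x + k) = f x := by
  have hx1' : x + 1 ≠ -1 := fun h => hx2 (by linear_combination h)
  have hshift := apply_eq_of_sum_range_shift_eq (fun j : ℕ => f (x + j)) k (by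
    rw [h x hx1, ← h (x + 1) hx1']
    exact sum_congr rfl fun j _ => by push_cast; ring_nf)
  simpa using hshift

/-- A cycle with one unchecked link: if `f (y + a) = f y` holds at every point `y ≠ b` of the
`a`-orbit of `b`, it holds at `b` too. -/
theorem apply_add_eq_of_forall_nsmul_ne_zero {G β : Type*} [AddGroup G] [Finite G]
    {f : G → β} {a b : G} (h : ∀ n : ℕ, n • a ≠ 0 → f (b + n • a + a) = f (b + n • a)) :
    f (b + a) = f b := by
  set t := addOrderOf a
  have ht : 0 < t := addOrderOf_pos a
  have hpath : ∀ n, n < t → f (b + (n + 1) • a) = f (b + a) := by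
    intro n hn
    induction n with
    | zero => simp
    | succ n ih =>
      rw [succ_nsmul, ← add_assoc, h _ (nsmul_ne_zero_of_lt_addOrderOf n.succ_ne_zero hn),
        ih (by omega)]
  have hclose := hpath (t - 1) (by omega)
  rwa [Nat.sub_add_cancel ht, addOrderOf_nsmul_eq_zero, add_zero, eq_comm] at hclose

theorem Function.periodic_of_forall_ne_of_sub_notMem_zmultiples {G β : Type*} [AddCommGroup G]
    [Finite G] {f : G → β} {a b c : G} (hbc : c - b ∉ AddSubgroup.zmultiples a)
    (h : ∀ x, x ≠ b → x ≠ c → f (x + a) = f x) : Periodic f a := by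
  have hcb : b - c ∉ AddSubgroup.zmultiples a := by
    rwa [← neg_sub, AddSubgroup.neg_mem_iff]
  have orbit_avoids : ∀ {b c : G}, c - b ∉ AddSubgroup.zmultiples a → ∀ n : ℕ, b + n • a ≠ c :=
    fun hbc n hn => hbc <| by
      rw [← hn, add_sub_cancel_left]
      exact AddSubgroup.nsmul_mem_zmultiples a n
  intro x
  by_cases hxb : x = b
  · subst hxb
    exact apply_add_eq_of_forall_nsmul_ne_zero fun n hn =>
      h _ (by simpa using hn) (orbit_avoids hbc n)
  by_cases hxc : x = c
  · subst hxc
    exact apply_add_eq_of_forall_nsmul_ne_zero fun n hn =>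
      h _ (orbit_avoids hcb n) (by simpa using hn)
  exact h x hxb hxc

theorem ZMod.one_notMem_zmultiples_natCast {k ℓ : ℕ} (h : 1 < Nat.gcd k ℓ) :
    (1 : ZMod ℓ) ∉ AddSubgroup.zmultiples (k : ZMod ℓ) := by
  intro h1
  obtain ⟨z, hz⟩ := AddSubgroup.mem_zmultiples_iff.1 h1
  rw [zsmul_eq_mul] at hz
  have hcop : Nat.Coprime k ℓ := (ZMod.isUnit_iff_coprime k ℓ).1 (.of_mul_eq_one_right _ hz)
  rw [Nat.Coprime] at hcop
  omega

theorem Function.Periodic.natCast_gcd {β : Type*} {ℓ k : ℕ} {f : ZMod ℓ → β}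
    (h : Periodic f (k : ZMod ℓ)) : Periodic f (Nat.gcd k ℓ : ZMod ℓ) := by
  have hgcd : (Nat.gcd k ℓ : ZMod ℓ) = (Nat.gcdA k ℓ : ZMod ℓ) * k := by
    have := congrArg (Int.cast : ℤ → ZMod ℓ) (Nat.gcd_eq_gcd_ab k ℓ)
    push_cast at this
    rw [this, ZMod.natCast_self, zero_mul, add_zero, mul_comm]
  rw [hgcd]
  exact h.int_mul _

theorem Function.Periodic.sum_range_mul {M : Type*} [AddCommMonoid M] {f : ℕ → M} {c : ℕ}
    (h : Periodic f c) (n : ℕ) : ∑ j ∈ range (n * c), f j = n • ∑ j ∈ range c, f j := by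
  induction n with
  | zero => simp
  | succ n ih =>
    rw [Nat.succ_mul, sum_range_add, ih, succ_nsmul]
    congr 1
    exact sum_congr rfl fun j _ => by rw [add_comm, ← smul_eq_mul, h.nsmul n j]

theorem sum_tightWindow {M : Type*} [AddCommMonoid M] {ℓ k : ℕ} (hkℓ : k ≤ ℓ) (f : ZMod ℓ → M)
    (i : ZMod ℓ) : ∑ x ∈ tightWindow ℓ k i, f x = ∑ j ∈ range k, f (i + j) := by
  refine sum_image fun a ha b hb hab => ?_
  have hcast : (a : ZMod ℓ) = b := add_left_cancel hab
  rw [ZMod.natCast_eq_natCast_iff'] at hcast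
  rw [mem_coe, mem_range] at ha hb
  rwa [Nat.mod_eq_of_lt (by omega), Nat.mod_eq_of_lt (by omega)] at hcast

theorem ZMod.val_lt_sub_one_of_ne_neg_one {ℓ : ℕ} [NeZero ℓ] {x : ZMod ℓ} (hx : x ≠ -1) :
    x.val < ℓ - 1 := by
  obtain ⟨n, rfl⟩ : ∃ n, ℓ = n + 1 := Nat.exists_eq_succ_of_ne_zero (NeZero.ne ℓ)
  have hne : x.val ≠ (-1 : ZMod (n + 1)).val := fun h => hx (ZMod.val_injective _ h)
  rw [ZMod.val_neg_one] at hne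
  have := ZMod.val_lt x
  omega

theorem no_tight_cycle_minus_in_G_general (k ℓ : ℕ) (hℓ : k + 2 ≤ ℓ)
    (hgcd : 1 < Nat.gcd k ℓ) (hndvd : ¬ k ∣ ℓ) (m : ℕ) (hm : m = k / Nat.gcd k ℓ)
    (N : ℕ) :
    ¬ ∃ g : ZMod ℓ → ZMod m × Fin N, Function.Injective g ∧
        ∀ i ∈ Finset.range (ℓ - 1),
          (∑ v ∈ (tightWindow ℓ k (i : ZMod ℓ)).image g, v.1) = 1 := by
  rintro ⟨g, hg, hedge⟩
  have : Fact (1 < ℓ) := ⟨by omega⟩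
  set F : ZMod ℓ → ZMod m := fun x => (g x).1
  have hwindow : ∀ x : ZMod ℓ, x ≠ -1 → ∑ j ∈ range k, F (x + j) = 1 := by
    intro x hx
    have h := hedge x.val (mem_range.2 (ZMod.val_lt_sub_one_of_ne_neg_one hx))
    rwa [sum_image fun _ _ _ _ hab => hg hab, sum_tightWindow (by omega),
      ZMod.natCast_zmod_val] at h
  have hperiodic : Periodic F (k : ZMod ℓ) :=
    periodic_of_forall_ne_of_sub_notMem_zmultiples
      (by rw [show (-1 : ZMod ℓ) - -2 = 1 by ring]; exact ZMod.one_notMem_zmultiples_natCast hgcd)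
      (apply_add_eq_of_sum_range_eq hwindow)
  have hperiodic_nat : Periodic (fun j : ℕ => F j) (Nat.gcd k ℓ) := fun j => by
    simpa using hperiodic.natCast_gcd (j : ZMod ℓ)
  have hzero : ∑ j ∈ range k, F j = 0 := by
    rw [← Nat.div_mul_cancel (Nat.gcd_dvd_left k ℓ), ← hm, hperiodic_nat.sum_range_mul,
      nsmul_eq_mul, ZMod.natCast_self, zero_mul]
  have hm1 : m = 1 := ZMod.subsingleton_iff.1 <| subsingleton_of_zero_eq_one <| by
    rw [← hzero, ← hwindow 0 (by simp)]
    simp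
  apply hndvd
  rw [← Nat.gcd_eq_left_iff_dvd]
  exact Nat.eq_of_dvd_of_div_eq_one (Nat.gcd_dvd_left k ℓ) (hm ▸ hm1)

/-- Let `k ≥ 3`, `ℓ ≥ k + 2` with `gcd(k, ℓ) > 1` and `k ∤ ℓ`; set `d = gcd(k, ℓ)` and
`m = k / d` (so `m > 1`). Then for every `N`, the `k`-graph `G_{m,N}` on vertex set
`ZMod m × Fin N` (class function `Prod.fst`, edges = `k`-sets whose first coordinates
sum to `1` in `ZMod m`) contains no copy of `C_ℓ^(k)-`: there is no injective map from
the vertices of the tight cycle such that every window except the one starting at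
`ℓ - 1` (the removed edge) is sent to an edge of `G_{m,N}`. -/
theorem no_tight_cycle_minus_in_G (k ℓ : ℕ) (hk : 3 ≤ k) (hℓ : k + 2 ≤ ℓ)
    (hgcd : 1 < Nat.gcd k ℓ) (hndvd : ¬ k ∣ ℓ) (m : ℕ) (hm : m = k / Nat.gcd k ℓ)
    (N : ℕ) :
    ¬ ∃ g : ZMod ℓ → ZMod m × Fin N, Function.Injective g ∧
        ∀ i ∈ Finset.range (ℓ - 1),
          (∑ v ∈ (tightWindow ℓ k (i : ZMod ℓ)).image g, v.1) = 1 :=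
  no_tight_cycle_minus_in_G_general k ℓ hℓ hgcd hndvd m hm N
end

section
/- Let k ≥ 3, p > k prime, m = kp with m ≥ 52, and let t, s ≥ 2 with t + s = k. Suppose a, b ∈ Z/mZ satisfy ta + sb = 1. Then there exist c, d ∈ Z/mZ such that, setting a' = 1 − ((t−2)a + sb + c), b' = 1 − ((t−1)a + (s−1)b + c), a'' = 1 − ((t−1)a + (s−1)b + d), b'' = 1 − (ta + (s−2)b + d), the following hold: (i) a, b, c, a', b' are pairwise distinct; (ii) a, b, d, a'', b'' are pairwise distinct; (iii) for every pair {x, y} of distinct elements from {a, b, c, a', b'} other than {a', b'} and {a, b}, and also for (x, y) = (b, a), we have tx + sy ≠ 1; (iv) the analogous statement with {a, b, d, a'', b''} and excluded pairs {a'', b''}, {a, b}; (v) c ≠ d, c ≠ a'', and d ≠ b'. -/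
/-!
Since `ta + sb = 1`, the points are `a' = 2a - c`, `b' = a + b - c`, `a'' = a + b - d` and
`b'' = 2b - d`, so `a, b, c, a', b'` are affine functions of `c` with slopes `0, 0, 1, -1, -1`.
For two of them with different slopes, `x ≠ y` and `tx + sy ≠ 1` are affine conditions on `c` of
slope `±1, ±2, ±t, ±s` or `±(t - s)`. In `ℤ/mℤ` each of these divides `2` (`t` and `s` are
units and `gcd(t - s, m) ∣ 2`), so each condition excludes at most `#{x | 2x = 0} ≤ 2` values
of `c`. The pairs of equal slope are `{a, b}` and `{a', b'}`: exactly the exempted pairs, and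
distinct as soon as `a ≠ b`. The 24 conditions exclude at most 48 of the `m ≥ 52` values, which
leaves room for `c` and then for `d ∉ {c, a + b - c}`; the conditions on `d` are those on `c`
with `a` and `b` exchanged.
-/

open Finset

section Counting

variable {R : Type*} [CommRing R] [Fintype R] [DecidableEq R]

theorem card_filter_eq_zero_le_of_slope_dvd_two {f : R → R} {α : R} (hα : α ∣ 2)
    (hf : ∀ x y, f x - f y = α * (x - y)) :
    #{x | f x = 0} ≤ #{x : R | 2 * x = 0} := by
  rcases Finset.eq_empty_or_nonempty ({x | f x = 0} : Finset R) with h | ⟨x₀, hx₀⟩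
  · simp [h]
  obtain ⟨γ, hγ⟩ := hα
  refine card_le_card_of_injOn (· - x₀) (fun x hx => ?_) (fun x _ y _ h => sub_left_injective h)
  simp only [coe_filter, Set.mem_ofPred_eq, mem_filter, mem_univ, true_and] at hx hx₀ ⊢
  have := hf x x₀
  rw [hx, hx₀] at this
  linear_combination (x - x₀) * hγ - γ * this

theorem exists_forall_ne_zero_of_slope_dvd_two {ι : Type*} (I : Finset ι) (f : ι → R → R)
    (hf : ∀ i ∈ I, ∃ α, α ∣ 2 ∧ ∀ x y, f i x - f i y = α * (x - y)) (S : Finset R)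
    (hcard : #I * #{x : R | 2 * x = 0} + #S < Fintype.card R) :
    ∃ c ∉ S, ∀ i ∈ I, f i c ≠ 0 := by
  have hbad : #(I.biUnion fun i => {x | f i x = 0}) ≤ #I * #{x : R | 2 * x = 0} :=
    card_biUnion_le_card_mul _ _ _ fun i hi =>
      have ⟨_, hα, hfi⟩ := hf i hi
      card_filter_eq_zero_le_of_slope_dvd_two hα hfi
  have hlt : #(S ∪ I.biUnion fun i => {x | f i x = 0}) < #(univ : Finset R) :=
    (card_union_le _ _).trans_lt (by rw [card_univ]; omega)
  obtain ⟨c, -, hc⟩ := exists_mem_notMem_of_card_lt_card hlt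
  simp only [mem_union, mem_biUnion, mem_filter, mem_univ, true_and, not_or, not_exists,
    not_and] at hc
  exact ⟨c, hc.1, hc.2⟩

end Counting

theorem ZMod.card_filter_two_mul_eq_zero_le (m : ℕ) [NeZero m] :
    #{x : ZMod m | 2 * x = 0} ≤ 2 := by
  convert IsAddCyclic.card_nsmul_eq_zero_le (α := ZMod m) two_pos using 3
  simp [two_mul]

theorem ZMod.intCast_dvd_gcd (D : ℤ) (m : ℕ) : (D : ZMod m) ∣ (Int.gcd D m : ZMod m) :=
  ⟨Int.gcdA D m, by simpa using congrArg (Int.cast : ℤ → ZMod m) (Int.gcd_eq_gcd_ab D m)⟩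

theorem ZMod.coprime_gcd_of_mul_add_mul_eq_one {m t s : ℕ} {a b : ZMod m}
    (h : t * a + s * b = 1) : (t.gcd s).Coprime m := by
  rw [← ZMod.isUnit_iff_coprime]
  refine isUnit_of_dvd_one (h ▸ dvd_add (dvd_mul_of_dvd_left ?_ a) (dvd_mul_of_dvd_left ?_ b))
  · exact Nat.cast_dvd_cast (Nat.gcd_dvd_left t s)
  · exact Nat.cast_dvd_cast (Nat.gcd_dvd_right t s)

theorem ZMod.dvd_of_natCast_mul_eq {k p n : ℕ} (hp : p ≠ 0) {x : ZMod (k * p)}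
    (h : (k : ZMod (k * p)) * x = n) : k ∣ n := by
  have : ((p * n : ℕ) : ZMod (k * p)) = 0 := by
    rw [Nat.cast_mul, ← h, ← mul_assoc, ← Nat.cast_mul, mul_comm p k, ZMod.natCast_self,
      zero_mul]
  rw [ZMod.natCast_eq_zero_iff, mul_comm p] at this
  exact Nat.dvd_of_mul_dvd_mul_right (Nat.pos_of_ne_zero hp) this

theorem ZMod.coprime_of_mul_add_mul_eq_one {t s p : ℕ} {a b : ZMod ((t + s) * p)}
    (h : t * a + s * b = 1) : t.Coprime s :=
  (ZMod.coprime_gcd_of_mul_add_mul_eq_one h).eq_one_of_dvd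
    (((Nat.gcd_dvd_left t s).add (Nat.gcd_dvd_right t s)).mul_right p)

theorem ZMod.ne_of_mul_add_mul_eq_one {t s p : ℕ} (hp : p ≠ 0) (hts : t + s ≠ 1)
    {a b : ZMod ((t + s) * p)} (h : t * a + s * b = 1) : a ≠ b := by
  rintro rfl
  have := ZMod.dvd_of_natCast_mul_eq (n := 1) (x := a) hp (by push_cast; linear_combination h)
  exact hts (Nat.dvd_one.mp this)

theorem ZMod.mul_add_mul_swap_ne_one {t s p : ℕ} (hp : p ≠ 0) (hts : 2 < t + s)
    {a b : ZMod ((t + s) * p)} (h : t * a + s * b = 1) :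
    (t : ZMod ((t + s) * p)) * b + s * a ≠ 1 :=
  fun h' => by
    have := ZMod.dvd_of_natCast_mul_eq (n := 2) (x := a + b) hp
      (by push_cast; linear_combination h + h')
    exact hts.not_ge (Nat.le_of_dvd two_pos this)

theorem Int.gcd_sub_add_mul_prime_dvd_two {t s p : ℕ} (hp : p.Prime) (htp : t < p) (hsp : s < p)
    (hne : t ≠ s) (hcop : t.Coprime s) : Int.gcd ((t : ℤ) - s) ((t + s) * p) ∣ 2 := by
  set g := Int.gcd ((t : ℤ) - s) ((t + s) * p)
  have hgD : (g : ℤ) ∣ t - s := Int.gcd_dvd_left _ _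
  have hpg : IsCoprime (g : ℤ) p := by
    refine ((Prime.coprime_iff_not_dvd (Nat.prime_iff_prime_int.mp hp)).mpr fun hdvd => ?_).symm
    have : (t : ℤ) - s = 0 := Int.eq_zero_of_abs_lt_dvd (hdvd.trans hgD) (by rw [abs_lt]; omega)
    omega
  have hgk : (g : ℤ) ∣ t + s := hpg.dvd_of_dvd_mul_right (Int.gcd_dvd_right _ _)
  obtain ⟨u, v, huv⟩ := Nat.isCoprime_iff_coprime.mpr hcop
  have h2 : (2 : ℤ) = ((t + s) + (t - s)) * u + ((t + s) - (t - s)) * v := by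
    linear_combination -2 * huv
  have : (g : ℤ) ∣ 2 := h2 ▸ dvd_add ((hgk.add hgD).mul_right u) ((hgk.sub hgD).mul_right v)
  exact_mod_cast this

theorem ZMod.isUnit_natCast_of_lt_prime {n k p : ℕ} (hp : p.Prime) (hn : n ≠ 0) (hnp : n < p)
    (hnk : n.Coprime k) : IsUnit (n : ZMod (k * p)) :=
  (ZMod.isUnit_iff_coprime _ _).mpr (hnk.mul_right (Nat.coprime_of_lt_prime hn hnp hp).symm)

theorem ZMod.natCast_sub_natCast_dvd_two {t s p : ℕ} (hp : p.Prime) (htp : t < p) (hsp : s < p)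
    (hne : t ≠ s) (hcop : t.Coprime s) : (t : ZMod ((t + s) * p)) - s ∣ 2 := by
  have := (ZMod.intCast_dvd_gcd ((t : ℤ) - s) ((t + s) * p)).trans
    (Nat.cast_dvd_cast (Int.gcd_sub_add_mul_prime_dvd_two hp htp hsp hne hcop))
  exact_mod_cast this

section FivePoints

variable {R : Type*} [CommRing R]

def fivePoints (a b c : R) : Fin 5 → R := ![a, b, c, 2 * a - c, a + b - c]

def fivePointsSlope : Fin 5 → ℤ := ![0, 0, 1, -1, -1]

theorem fivePoints_sub (a b x y : R) (i : Fin 5) :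
    fivePoints a b x i - fivePoints a b y i = fivePointsSlope i * (x - y) := by
  fin_cases i <;> simp [fivePoints, fivePointsSlope]

theorem fivePointsSlope_eq_iff {i j : Fin 5} :
    fivePointsSlope i = fivePointsSlope j ↔
      i = j ∨ ({i, j} : Finset (Fin 5)) = {0, 1} ∨ ({i, j} : Finset (Fin 5)) = {3, 4} := by
  revert i j; decide

theorem fivePointsSlope_sub_dvd_two {i j : Fin 5} (h : fivePointsSlope i < fivePointsSlope j) :
    fivePointsSlope i - fivePointsSlope j ∣ 2 := by
  revert i j; decide

theorem mul_fivePointsSlope_add_dvd_two {t s : R} (ht : t ∣ 2) (hs : s ∣ 2) (hts : t - s ∣ 2)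
    {i j : Fin 5} (h : fivePointsSlope i ≠ fivePointsSlope j) :
    t * fivePointsSlope i + s * fivePointsSlope j ∣ 2 := by
  have hst : s - t ∣ 2 := neg_sub t s ▸ hts.neg_left
  fin_cases i <;> fin_cases j <;> simp_all [fivePointsSlope, ← sub_eq_add_neg, neg_add_eq_sub]

variable [DecidableEq R]

def IsAdmissible (t s a b x a' b' : R) : Prop :=
  [a, b, x, a', b'].Nodup ∧
    ∀ y ∈ ({a, b, x, a', b'} : Finset R), ∀ z ∈ ({a, b, x, a', b'} : Finset R), y ≠ z →
      ({y, z} : Finset R) ≠ {a', b'} → ({y, z} : Finset R) ≠ {a, b} → t * y + s * z ≠ 1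

theorem IsAdmissible.swap {t s a b x a' b' : R} (h : IsAdmissible t s a b x a' b') :
    IsAdmissible t s b a x b' a' := by
  have hperm : [a, b, x, a', b'].Perm [b, a, x, b', a'] :=
    .trans (.swap _ _ _) (.cons _ (.cons _ (.cons _ (.swap _ _ _))))
  have hset : ({b, a, x, b', a'} : Finset R) = {a, b, x, a', b'} := by
    ext; simp only [mem_insert, mem_singleton]; tauto
  refine ⟨hperm.nodup_iff.mp h.1, ?_⟩
  rw [hset, pair_comm b', pair_comm b]
  exact h.2

theorem isAdmissible_of_forall {t s a b c : R} (hab : a ≠ b)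
    (h₁ : ∀ i j, fivePointsSlope i ≠ fivePointsSlope j →
      t * fivePoints a b c i + s * fivePoints a b c j ≠ 1)
    (h₂ : ∀ i j, fivePointsSlope i < fivePointsSlope j →
      fivePoints a b c i ≠ fivePoints a b c j) :
    IsAdmissible t s a b c (2 * a - c) (a + b - c) := by
  set P := fivePoints a b c
  have hpair (i j : Fin 5) : ({P i, P j} : Finset R) = ({i, j} : Finset (Fin 5)).image P := by
    simp [image_insert]
  have h01 : ({P 0, P 1} : Finset R) = {a, b} := rfl
  have h34 : ({P 3, P 4} : Finset R) = {2 * a - c, a + b - c} := rfl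
  have hinj : Function.Injective P := by
    intro i j hij
    by_contra hne
    rcases lt_trichotomy (fivePointsSlope i) (fivePointsSlope j) with hlt | heq | hgt
    · exact h₂ i j hlt hij
    · have hcard := congrArg card (hpair i j)
      rw [hij, pair_eq_singleton, card_singleton] at hcard
      rcases fivePointsSlope_eq_iff.mp heq with rfl | h | h
      · exact hne rfl
      · rw [h, ← hpair, h01, card_pair hab] at hcard; omega
      · rw [h, ← hpair, h34, card_pair fun h => hab (by linear_combination h)] at hcard; omega
    · exact h₂ j i hgt hij.symm
  have himage : univ.image P = {a, b, c, 2 * a - c, a + b - c} := by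
    simp [P, fivePoints, Fin.univ_succ, image_insert]
  refine ⟨List.nodup_ofFn.mpr hinj, ?_⟩
  simp only [← himage, forall_mem_image, mem_univ, true_implies]
  intro i j hne hne₃₄ hne₀₁
  refine h₁ i j fun heq => ?_
  rcases fivePointsSlope_eq_iff.mp heq with rfl | h | h
  · exact hne rfl
  · exact hne₀₁ (by rw [hpair, h, ← hpair, h01])
  · exact hne₃₄ (by rw [hpair, h, ← hpair, h34])

theorem exists_isAdmissible [Fintype R] {t s : R} (ht : t ∣ 2) (hs : s ∣ 2) (hts : t - s ∣ 2)
    {a b : R} (hab : a ≠ b) (S : Finset R)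
    (hcard : 24 * #{x : R | 2 * x = 0} + #S < Fintype.card R) :
    ∃ c ∉ S, IsAdmissible t s a b c (2 * a - c) (a + b - c) := by
  let I : Finset (Fin 5 × Fin 5) := {ij | fivePointsSlope ij.1 ≠ fivePointsSlope ij.2}
  let J : Finset (Fin 5 × Fin 5) := {ij | fivePointsSlope ij.1 < fivePointsSlope ij.2}
  let f : (Fin 5 × Fin 5) ⊕ (Fin 5 × Fin 5) → R → R := Sum.elim
    (fun ij c => t * fivePoints a b c ij.1 + s * fivePoints a b c ij.2 - 1)
    (fun ij c => fivePoints a b c ij.1 - fivePoints a b c ij.2)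
  -- 16 ordered pairs for `tx + sy ≠ 1`, 8 unordered pairs for `x ≠ y`
  have hIJ : #(I.disjSum J) = 24 := rfl
  have hf : ∀ k ∈ I.disjSum J, ∃ α, α ∣ 2 ∧ ∀ x y, f k x - f k y = α * (x - y) := by
    rintro (⟨i, j⟩ | ⟨i, j⟩) hk <;>
      simp only [inl_mem_disjSum, inr_mem_disjSum, mem_filter, mem_univ, true_and, I, J] at hk
    · refine ⟨_, mul_fivePointsSlope_add_dvd_two ht hs hts hk, fun x y => ?_⟩
      simp only [f, Sum.elim_inl]
      linear_combination t * fivePoints_sub a b x y i + s * fivePoints_sub a b x y j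
    · refine ⟨(fivePointsSlope i : R) - fivePointsSlope j, ?_, fun x y => ?_⟩
      · exact_mod_cast Int.cast_dvd_cast _ _ (fivePointsSlope_sub_dvd_two hk)
      simp only [f, Sum.elim_inr]
      linear_combination fivePoints_sub a b x y i - fivePoints_sub a b x y j
  obtain ⟨c, hcS, hc⟩ := exists_forall_ne_zero_of_slope_dvd_two _ f hf S (by rwa [hIJ])
  refine ⟨c, hcS, isAdmissible_of_forall hab (fun i j hij => ?_) (fun i j hij => ?_)⟩
  · exact sub_ne_zero.mp (hc (.inl (i, j)) (by simpa [I] using hij))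
  · exact sub_ne_zero.mp (hc (.inr (i, j)) (by simpa [J] using hij))

end FivePoints

theorem exists_c_d_general (k p m : ℕ) (hp : p.Prime) (hpk : k < p)
    (hm : m = k * p) (hm52 : 52 ≤ m)
    (t s : ℕ) (ht : 2 ≤ t) (hs : 2 ≤ s) (hts : t + s = k)
    (a b : ZMod m) (hab : (t : ZMod m) * a + (s : ZMod m) * b = 1) :
    ∃ c d a' b' a'' b'' : ZMod m,
      a' = 1 - (((t - 2 : ℕ) : ZMod m) * a + (s : ZMod m) * b + c) ∧
      b' = 1 - (((t - 1 : ℕ) : ZMod m) * a + ((s - 1 : ℕ) : ZMod m) * b + c) ∧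
      a'' = 1 - (((t - 1 : ℕ) : ZMod m) * a + ((s - 1 : ℕ) : ZMod m) * b + d) ∧
      b'' = 1 - ((t : ZMod m) * a + ((s - 2 : ℕ) : ZMod m) * b + d) ∧
      -- (i)
      List.Pairwise (· ≠ ·) [a, b, c, a', b'] ∧
      -- (ii)
      List.Pairwise (· ≠ ·) [a, b, d, a'', b''] ∧
      -- (iii)
      (∀ x ∈ ({a, b, c, a', b'} : Finset (ZMod m)),
        ∀ y ∈ ({a, b, c, a', b'} : Finset (ZMod m)), x ≠ y →
          ({x, y} : Finset (ZMod m)) ≠ {a', b'} →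
          ({x, y} : Finset (ZMod m)) ≠ {a, b} →
          (t : ZMod m) * x + (s : ZMod m) * y ≠ 1) ∧
      (t : ZMod m) * b + (s : ZMod m) * a ≠ 1 ∧
      -- (iv)
      (∀ x ∈ ({a, b, d, a'', b''} : Finset (ZMod m)),
        ∀ y ∈ ({a, b, d, a'', b''} : Finset (ZMod m)), x ≠ y →
          ({x, y} : Finset (ZMod m)) ≠ {a'', b''} →
          ({x, y} : Finset (ZMod m)) ≠ {a, b} →
          (t : ZMod m) * x + (s : ZMod m) * y ≠ 1) ∧
      -- (v)
      c ≠ d ∧ c ≠ a'' ∧ d ≠ b' := by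
  subst hm hts
  have : NeZero ((t + s) * p) := ⟨by omega⟩
  have hcop := ZMod.coprime_of_mul_add_mul_eq_one hab
  have htu : (t : ZMod ((t + s) * p)) ∣ 2 := IsUnit.dvd <| ZMod.isUnit_natCast_of_lt_prime hp
    (by omega) (by omega) (Nat.coprime_self_add_right.mpr hcop)
  have hsu : (s : ZMod ((t + s) * p)) ∣ 2 := IsUnit.dvd <| ZMod.isUnit_natCast_of_lt_prime hp
    (by omega) (by omega) (Nat.coprime_add_self_right.mpr hcop.symm)
  have htsu := ZMod.natCast_sub_natCast_dvd_two hp (by omega) (by omega)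
    (fun h => by rw [h, Nat.coprime_self] at hcop; omega) hcop
  have hne := ZMod.ne_of_mul_add_mul_eq_one hp.ne_zero (by omega) hab
  have hcard (S : Finset (ZMod ((t + s) * p))) (hS : #S ≤ 2) :
      24 * #{x : ZMod ((t + s) * p) | 2 * x = 0} + #S < Fintype.card (ZMod ((t + s) * p)) := by
    have := ZMod.card_filter_two_mul_eq_zero_le ((t + s) * p)
    rw [ZMod.card]
    omega
  obtain ⟨c, -, hc⟩ := exists_isAdmissible htu hsu htsu hne ∅ (hcard ∅ (by simp))
  obtain ⟨d, hdS, hd⟩ := exists_isAdmissible htu hsu htsu hne.symm {c, a + b - c}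
    (hcard _ card_le_two)
  rw [mem_insert, mem_singleton, not_or] at hdS
  have hd' := hd.swap
  rw [add_comm b a] at hd'
  refine ⟨c, d, 2 * a - c, a + b - c, a + b - d, 2 * b - d, ?_, ?_, ?_, ?_, hc.1, hd'.1, hc.2,
    ZMod.mul_add_mul_swap_ne_one hp.ne_zero (by omega) hab, hd'.2, Ne.symm hdS.1,
    fun h => hdS.2 (by linear_combination h), hdS.2⟩ <;>
  push_cast [Nat.cast_sub ht, Nat.cast_sub hs, Nat.cast_sub (one_le_two.trans ht),
    Nat.cast_sub (one_le_two.trans hs)] <;>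
  linear_combination hab

/-- Claim 2 of the paper: let `k ≥ 3`, `p > k` prime, `m = kp ≥ 52`, and `t, s ≥ 2`
with `t + s = k` and `ta + sb = 1` in `ZMod m`. Then one can choose `c, d ∈ ZMod m`
such that, with `a' = 1 - ((t-2)a + sb + c)`, `b' = 1 - ((t-1)a + (s-1)b + c)`,
`a'' = 1 - ((t-1)a + (s-1)b + d)`, `b'' = 1 - (ta + (s-2)b + d)`:
(i) `a, b, c, a', b'` are pairwise distinct;
(ii) `a, b, d, a'', b''` are pairwise distinct;
(iii) for all distinct `x, y ∈ {a, b, c, a', b'}` with `{x, y} ∉ {{a', b'}, {a, b}}`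
we have `tx + sy ≠ 1`, and also `tb + sa ≠ 1`;
(iv) the analogue of (iii) for `{a, b, d, a'', b''}` with excluded pairs
`{a'', b''}` and `{a, b}`;
(v) `c ≠ d`, `c ≠ a''` and `d ≠ b'`. -/
theorem exists_c_d (k p m : ℕ) (hk : 3 ≤ k) (hp : p.Prime) (hpk : k < p)
    (hm : m = k * p) (hm52 : 52 ≤ m)
    (t s : ℕ) (ht : 2 ≤ t) (hs : 2 ≤ s) (hts : t + s = k)
    (a b : ZMod m) (hab : (t : ZMod m) * a + (s : ZMod m) * b = 1) :
    ∃ c d a' b' a'' b'' : ZMod m,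
      a' = 1 - (((t - 2 : ℕ) : ZMod m) * a + (s : ZMod m) * b + c) ∧
      b' = 1 - (((t - 1 : ℕ) : ZMod m) * a + ((s - 1 : ℕ) : ZMod m) * b + c) ∧
      a'' = 1 - (((t - 1 : ℕ) : ZMod m) * a + ((s - 1 : ℕ) : ZMod m) * b + d) ∧
      b'' = 1 - ((t : ZMod m) * a + ((s - 2 : ℕ) : ZMod m) * b + d) ∧
      -- (i)
      List.Pairwise (· ≠ ·) [a, b, c, a', b'] ∧
      -- (ii)
      List.Pairwise (· ≠ ·) [a, b, d, a'', b''] ∧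
      -- (iii)
      (∀ x ∈ ({a, b, c, a', b'} : Finset (ZMod m)),
        ∀ y ∈ ({a, b, c, a', b'} : Finset (ZMod m)), x ≠ y →
          ({x, y} : Finset (ZMod m)) ≠ {a', b'} →
          ({x, y} : Finset (ZMod m)) ≠ {a, b} →
          (t : ZMod m) * x + (s : ZMod m) * y ≠ 1) ∧
      (t : ZMod m) * b + (s : ZMod m) * a ≠ 1 ∧
      -- (iv)
      (∀ x ∈ ({a, b, d, a'', b''} : Finset (ZMod m)),
        ∀ y ∈ ({a, b, d, a'', b''} : Finset (ZMod m)), x ≠ y →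
          ({x, y} : Finset (ZMod m)) ≠ {a'', b''} →
          ({x, y} : Finset (ZMod m)) ≠ {a, b} →
          (t : ZMod m) * x + (s : ZMod m) * y ≠ 1) ∧
      -- (v)
      c ≠ d ∧ c ≠ a'' ∧ d ≠ b' :=
  exists_c_d_general k p m hp hpk hm hm52 t s ht hs hts a b hab
end

section
/- Let k ≥ 2, μ > 0, and m a positive integer, and set η = 3^{−⌈log₂ m⌉ − 1}. There exists an integer n₀ such that for any finite set V with |V| > n₀, if S_1, ..., S_m are (μ, η)-good subsets of the (k−1)-subsets of V, then the intersection S_1 ∩ ... ∩ S_m is nonempty. -/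
/-! Two good partial partitions `(P i)` and `(Q j)` combine into the partial partition of the
intersections `P i ∩ Q j` that are not too small. There are at most `1/μ` parts on each side, so
the discarded small intersections cover at most `μ⁻² · ημ²|V| = η|V|` vertices, and the
intersection of two `(μ, η)`-good sets is `(ημ², 3η)`-good. Splitting `m ≤ 2^r` sets into two
halves and iterating `r` times, the intersection of all of them is `(μ', 3^r η)`-good for some
`μ' > 0` depending only on `μ`, `η` and `r`; with `η = 3^(-r-1)` less than a third of `V` is
uncovered, so some part has `μ'|V| ≥ k - 1` vertices once `|V|` is large, and any `(k-1)`-subset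
of it lies in every `S i`. -/

open Finset

/-- `A` is a `(μ, η)`-good subset of the `(k-1)`-subsets of the finite set `V`. -/
def IsGood {α : Type*} [DecidableEq α] (V : Finset α) (k : ℕ) (μ η : ℝ)
    (A : Finset (Finset α)) : Prop :=
  ∃ (t : ℕ) (P : Fin t → Finset α),
    (∀ i, P i ⊆ V) ∧
    (∀ i j, i ≠ j → Disjoint (P i) (P j)) ∧
    (∀ i, ∀ e ⊆ P i, e.card = k - 1 → e ∈ A) ∧
    (∀ i, μ * (V.card : ℝ) ≤ ((P i).card : ℝ)) ∧
    (((V \ Finset.univ.biUnion P).card : ℝ) ≤ η * (V.card : ℝ))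

section GoodFamily

open Function

variable {α ι κ : Type*} [DecidableEq α] [Fintype ι] [Fintype κ]
  {V : Finset α} {k : ℕ} {μ η η' : ℝ} {A B : Finset (Finset α)}

/-- The witness of `IsGood`, indexed by any finite type, so that the parts of an intersection can
be indexed by pairs of parts. -/
structure IsGoodFamily (V : Finset α) (k : ℕ) (μ η : ℝ) (A : Finset (Finset α))
    (P : ι → Finset α) : Prop where
  subset : ∀ i, P i ⊆ V
  pairwiseDisjoint : Pairwise (Disjoint on P)
  mem : ∀ i, ∀ e ⊆ P i, e.card = k - 1 → e ∈ A
  le_card : ∀ i, μ * V.card ≤ (P i).card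
  card_sdiff_le : ((V \ univ.biUnion P).card : ℝ) ≤ η * V.card

theorem IsGood.exists_isGoodFamily (h : IsGood V k μ η A) :
    ∃ (t : ℕ) (P : Fin t → Finset α), IsGoodFamily V k μ η A P :=
  let ⟨t, P, h₁, h₂, h₃, h₄, h₅⟩ := h
  ⟨t, P, h₁, h₂, h₃, h₄, h₅⟩

theorem IsGoodFamily.isGood {P : ι → Finset α} (h : IsGoodFamily V k μ η A P) :
    IsGood V k μ η A := by
  let e := Fintype.equivFin ι
  have hcover : univ.biUnion (P ∘ e.symm) = univ.biUnion P := by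
    ext a
    simp [e.symm.surjective.exists]
  refine ⟨_, P ∘ e.symm, fun i ↦ h.subset _, fun i j hij ↦ h.pairwiseDisjoint
    (e.symm.injective.ne hij), fun i ↦ h.mem _, fun i ↦ h.le_card _, ?_⟩
  rw [hcover]
  exact h.card_sdiff_le

theorem IsGoodFamily.card_mul_le {P : ι → Finset α} (h : IsGoodFamily V k μ η A P) :
    (Fintype.card ι : ℝ) * (μ * V.card) ≤ V.card := by
  calc (Fintype.card ι : ℝ) * (μ * V.card)
      = ∑ i, μ * V.card := by simp
    _ ≤ ∑ i, ((P i).card : ℝ) := sum_le_sum fun i _ ↦ h.le_card i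
    _ = (univ.biUnion P).card := by
      rw [card_biUnion (h.pairwiseDisjoint.set_pairwise _)]
      push_cast
      rfl
    _ ≤ V.card := by
      exact_mod_cast card_le_card (biUnion_subset.2 fun i _ ↦ h.subset i)

theorem IsGoodFamily.card_mul_card_mul_le {P : ι → Finset α} {Q : κ → Finset α}
    (hP : IsGoodFamily V k μ η A P) (hQ : IsGoodFamily V k μ η' B Q) (hμ : 0 ≤ μ) :
    (Fintype.card ι * Fintype.card κ : ℝ) * (μ ^ 2 * V.card) ≤ V.card := by
  rcases (V.card.cast_nonneg (α := ℝ)).eq_or_lt with hV | hV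
  · simp [← hV]
  have := mul_le_mul hP.card_mul_le hQ.card_mul_le (by positivity) (by positivity)
  nlinarith

theorem sdiff_biUnion_inter_subset {P : ι → Finset α} {Q : κ → Finset α}
    (large : ι × κ → Prop) [DecidablePred large] :
    V \ (univ.filter large).biUnion (fun p ↦ P p.1 ∩ Q p.2) ⊆
      (V \ univ.biUnion P) ∪ (V \ univ.biUnion Q) ∪
        (univ.filter (¬ large ·)).biUnion (fun p ↦ P p.1 ∩ Q p.2) := by
  intro v
  simp only [mem_sdiff, mem_union, mem_biUnion, mem_filter, mem_univ, true_and, mem_inter]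
  rintro ⟨hvV, hvLarge⟩
  by_cases hvP : ∃ i, v ∈ P i
  · by_cases hvQ : ∃ j, v ∈ Q j
    · obtain ⟨⟨i, hi⟩, ⟨j, hj⟩⟩ := And.intro hvP hvQ
      exact Or.inr ⟨(i, j), fun hl ↦ hvLarge ⟨(i, j), hl, hi, hj⟩, hi, hj⟩
    · exact Or.inl (Or.inr ⟨hvV, hvQ⟩)
  · exact Or.inl (Or.inl ⟨hvV, hvP⟩)

theorem IsGoodFamily.inter {P : ι → Finset α} {Q : κ → Finset α}
    (hP : IsGoodFamily V k μ η A P) (hQ : IsGoodFamily V k μ η B Q) (hμ : 0 ≤ μ) (hη : 0 ≤ η) :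
    IsGoodFamily V k (η * μ ^ 2) (3 * η) (A ∩ B)
      (fun p : {p : ι × κ // η * μ ^ 2 * V.card ≤ (P p.1 ∩ Q p.2).card} ↦ P p.1.1 ∩ Q p.1.2) where
  subset p := inter_subset_left.trans (hP.subset _)
  pairwiseDisjoint := by
    intro ⟨⟨i, j⟩, _⟩ ⟨⟨i', j'⟩, _⟩ hne
    rcases eq_or_ne i i' with rfl | hi
    · have hj : j ≠ j' := fun h ↦ hne (by subst h; rfl)
      exact (hQ.pairwiseDisjoint hj).mono inter_subset_right inter_subset_right
    · exact (hP.pairwiseDisjoint hi).mono inter_subset_left inter_subset_left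
  mem p e he hcard := mem_inter.2
    ⟨hP.mem _ e (he.trans inter_subset_left) hcard, hQ.mem _ e (he.trans inter_subset_right) hcard⟩
  le_card p := p.2
  card_sdiff_le := by
    set large := fun p : ι × κ ↦ η * μ ^ 2 * V.card ≤ ((P p.1 ∩ Q p.2).card : ℝ)
    set small := univ.filter (¬ large ·)
    have hcover : univ.biUnion (fun p : Subtype large ↦ P p.1.1 ∩ Q p.1.2) =
        (univ.filter large).biUnion (fun p ↦ P p.1 ∩ Q p.2) := by
      ext
      simp only [mem_biUnion, mem_univ, mem_filter, true_and, Subtype.exists, Prod.exists]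
      grind
    have hsmall : ((small.biUnion fun p ↦ P p.1 ∩ Q p.2).card : ℝ) ≤ η * V.card :=
      calc ((small.biUnion fun p ↦ P p.1 ∩ Q p.2).card : ℝ)
          ≤ ∑ p ∈ small, ((P p.1 ∩ Q p.2).card : ℝ) := by exact_mod_cast card_biUnion_le
        _ ≤ small.card • (η * μ ^ 2 * V.card) :=
          sum_le_card_nsmul _ _ _ fun p hp ↦ (not_le.1 (mem_filter.1 hp).2).le
        _ ≤ Fintype.card (ι × κ) * (η * μ ^ 2 * V.card) := by
          rw [nsmul_eq_mul]
          gcongr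
          exact_mod_cast card_filter_le _ _
        _ = η * ((Fintype.card ι * Fintype.card κ : ℝ) * (μ ^ 2 * V.card)) := by
          push_cast [Fintype.card_prod]
          ring
        _ ≤ η * V.card := by gcongr; exact hP.card_mul_card_mul_le hQ hμ
    rw [hcover]
    calc ((V \ (univ.filter large).biUnion (fun p ↦ P p.1 ∩ Q p.2)).card : ℝ)
        ≤ (V \ univ.biUnion P).card + (V \ univ.biUnion Q).card +
            (small.biUnion fun p ↦ P p.1 ∩ Q p.2).card := by
          exact_mod_cast (card_le_card (sdiff_biUnion_inter_subset large)).trans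
            ((card_union_le _ _).trans (Nat.add_le_add_right (card_union_le _ _) _))
      _ ≤ η * V.card + η * V.card + η * V.card := by
          linarith [hP.card_sdiff_le, hQ.card_sdiff_le]
      _ = 3 * η * V.card := by ring

theorem IsGood.inter (hA : IsGood V k μ η A) (hB : IsGood V k μ η B) (hμ : 0 ≤ μ) (hη : 0 ≤ η) :
    IsGood V k (η * μ ^ 2) (3 * η) (A ∩ B) := by
  obtain ⟨_, P, hP⟩ := hA.exists_isGoodFamily
  obtain ⟨_, Q, hQ⟩ := hB.exists_isGoodFamily
  exact (hP.inter hQ hμ hη).isGood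

theorem IsGood.mono {μ' η' : ℝ} (h : IsGood V k μ η A) (hμ : μ' ≤ μ) (hη : η ≤ η') :
    IsGood V k μ' η' A := by
  obtain ⟨t, P, h₁, h₂, h₃, h₄, h₅⟩ := h
  exact ⟨t, P, h₁, h₂, h₃, fun i ↦ (mul_le_mul_of_nonneg_right hμ V.card.cast_nonneg).trans (h₄ i),
    h₅.trans (mul_le_mul_of_nonneg_right hη V.card.cast_nonneg)⟩

theorem IsGood.nonempty (h : IsGood V k μ η A) (hη : η < 1) (hV : V.Nonempty)
    (hμ : ((k - 1 : ℕ) : ℝ) ≤ μ * V.card) : A.Nonempty := by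
  obtain ⟨t, P, hP⟩ := h.exists_isGoodFamily
  rcases t with _ | t
  · have hcard := hP.card_sdiff_le
    have hVpos : (0 : ℝ) < V.card := by exact_mod_cast hV.card_pos
    simp only [univ_eq_empty, biUnion_empty, sdiff_empty] at hcard
    nlinarith
  · obtain ⟨e, he, hcard⟩ :=
      exists_subset_card_eq (s := P 0) (by exact_mod_cast hμ.trans (hP.le_card 0))
    exact ⟨e, hP.mem 0 e he hcard⟩

end GoodFamily

universe u v

theorem exists_isGood_inf' (r : ℕ) {μ η : ℝ} (hμ : 0 < μ) (hη : 0 < η) :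
    ∃ μ' > 0, ∀ {ι : Type u} {α : Type v} [DecidableEq α] (V : Finset α) (k : ℕ)
      (S : ι → Finset (Finset α)) (s : Finset ι) (hs : s.Nonempty), s.card ≤ 2 ^ r →
      (∀ i ∈ s, IsGood V k μ η (S i)) → IsGood V k μ' (3 ^ r * η) (s.inf' hs S) := by
  induction r with
  | zero =>
    refine ⟨μ, hμ, fun V k S s hs hcard hS ↦ ?_⟩
    obtain ⟨i, rfl⟩ := card_eq_one.1 (le_antisymm hcard hs.card_pos)
    simpa using hS i (mem_singleton_self i)
  | succ r ih =>
    classical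
    obtain ⟨μ', hμ', hgood⟩ := ih
    -- the `min` makes the density non-increasing in `r`, so that the case `#s ≤ 2 ^ r` follows
    refine ⟨min μ' (3 ^ r * η * μ' ^ 2), by positivity, fun V k S s hs hcard hS ↦ ?_⟩
    rcases le_or_gt s.card (2 ^ r) with hle | hlt
    · exact (hgood V k S s hs hle hS).mono (min_le_left _ _) (by gcongr <;> norm_num)
    obtain ⟨s₁, hs₁, hcard₁⟩ := exists_subset_card_eq hlt.le
    have hcard₂ : (s \ s₁).card ≤ 2 ^ r := by
      rw [card_sdiff_of_subset hs₁, hcard₁]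
      rw [pow_succ] at hcard
      omega
    have hs₁ne : s₁.Nonempty := card_pos.1 (hcard₁ ▸ by positivity)
    have hs₂ne : (s \ s₁).Nonempty := card_pos.1 (by rw [card_sdiff_of_subset hs₁]; omega)
    have hinf : s.inf' hs S = s₁.inf' hs₁ne S ∩ (s \ s₁).inf' hs₂ne S := by
      ext e
      simp only [mem_inf', mem_inter, mem_sdiff]
      grind
    rw [hinf]
    have hgood₁ := hgood V k S s₁ hs₁ne hcard₁.le fun i hi ↦ hS i (hs₁ hi)
    have hgood₂ := hgood V k S (s \ s₁) hs₂ne hcard₂ fun i hi ↦ hS i (sdiff_subset hi)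
    exact (hgood₁.inter hgood₂ hμ'.le (by positivity)).mono (min_le_right _ _)
      (le_of_eq (by ring))

theorem good_sets_inter_nonempty_general (k : ℕ) (μ : ℝ) (hμ : 0 < μ)
    (m : ℕ) (hm : 1 ≤ m) :
    ∃ n₀ : ℕ, ∀ (α : Type) [DecidableEq α] (V : Finset α)
      (S : Fin m → Finset (Finset α)),
      n₀ < V.card →
      (∀ i, IsGood V k μ ((3 : ℝ) ^ (-(Nat.clog 2 m : ℤ) - 1)) (S i)) →
      ∃ e : Finset α, ∀ i : Fin m, e ∈ S i := by
  set r := Nat.clog 2 m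
  have hη : (3 : ℝ) ^ r * 3 ^ (-(r : ℤ) - 1) = 3⁻¹ := by
    rw [← zpow_natCast, ← zpow_add₀ three_ne_zero, show (r : ℤ) + (-r - 1) = -1 by ring,
      zpow_neg_one]
  obtain ⟨μ', hμ', hinf⟩ := exists_isGood_inf' r hμ (by positivity : (0 : ℝ) < 3 ^ (-(r : ℤ) - 1))
  obtain ⟨n₀, hn₀⟩ := exists_nat_ge (((k - 1 : ℕ) : ℝ) / μ')
  refine ⟨n₀, fun α _ V S hV hS ↦ ?_⟩
  have hgood := hinf V k S univ (univ_nonempty_iff.2 ⟨⟨0, hm⟩⟩)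
    (by simpa using Nat.le_pow_clog one_lt_two m) fun i _ ↦ hS i
  rw [hη] at hgood
  have hμV : ((k - 1 : ℕ) : ℝ) ≤ μ' * V.card :=
    (div_le_iff₀' hμ').1 (hn₀.trans (by exact_mod_cast hV.le))
  obtain ⟨e, he⟩ := hgood.nonempty (by norm_num) (card_pos.1 (by omega)) hμV
  exact ⟨e, fun i ↦ (mem_inf' _).1 he i (mem_univ i)⟩

/-- Corollary 4.3: for `k ≥ 2`, `μ > 0` and `m ≥ 1`, with `η = 3^(-⌈log₂ m⌉ - 1)`,
there is `n₀` such that any `m` sets `S_1, ..., S_m` that are `(μ, η)`-good subsets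
of the `(k-1)`-subsets of a finite set `V` with `|V| > n₀` have nonempty
intersection. -/
theorem good_sets_inter_nonempty (k : ℕ) (hk : 2 ≤ k) (μ : ℝ) (hμ : 0 < μ)
    (m : ℕ) (hm : 1 ≤ m) :
    ∃ n₀ : ℕ, ∀ (α : Type) [DecidableEq α] (V : Finset α)
      (S : Fin m → Finset (Finset α)),
      n₀ < V.card →
      (∀ i, IsGood V k μ ((3 : ℝ) ^ (-(Nat.clog 2 m : ℤ) - 1)) (S i)) →
      ∃ e : Finset α, ∀ i : Fin m, e ∈ S i :=
  good_sets_inter_nonempty_general k μ hμ m hm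
end

section
/- Let G be a k-graph on n vertices with minimum codegree δ_{k−1}(G) ≥ εn, where 0 < ε ≤ 1. For f ∈ V(G)^(k−2) let ⃐N(f) = {e ∈ V^(k−1) : e ∪ {v} ∈ E for every v ∈ f}. Then for every nonempty family S ⊆ V(G)^(k−1) there exists f ∈ V(G)^(k−2) such that |⃐N(f) ∩ S| ≥ |S| · C(⌈εn⌉, k−2) / C(n, k−2); equivalently, the double count ∑_{f ∈ V^(k−2)} |⃐N(f) ∩ S| = ∑_{e ∈ S} C(|N(e)|, k−2) ≥ |S| · C(εn, k−2) holds, and some f achieves the average. -/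
open Finset

variable {α : Type*} [Fintype α] [DecidableEq α]

/-- The neighbourhood `N(e) = {v : e ∪ {v} ∈ E}` of a set `e` in a hypergraph `G`. -/
def nbhd (G : Finset (Finset α)) (e : Finset α) : Finset α :=
  Finset.univ.filter fun v => insert v e ∈ G

/-- The back neighbourhood of `f`: all `(k-1)`-sets `e` with `e ∪ {v} ∈ E` for every
`v ∈ f`. -/
def backNbhd (G : Finset (Finset α)) (k : ℕ) (f : Finset α) : Finset (Finset α) :=
  (Finset.univ.powersetCard (k - 1)).filter fun e => ∀ v ∈ f, insert v e ∈ G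

/-- Averaging step: let `G` be a `k`-graph on `n` vertices with minimum codegree at
least `εn` (`0 < ε ≤ 1`). Then for every nonempty family `S` of `(k-1)`-subsets of
the vertex set, there is a `(k-2)`-set `f` with
`|⃐N(f) ∩ S| ≥ |S|·C(⌈εn⌉, k-2)/C(n, k-2)`. -/
theorem exists_back_nbhd_dense (k : ℕ) (hk : 2 ≤ k) (ε : ℝ) (hε : 0 < ε)
    (hε1 : ε ≤ 1) (G : Finset (Finset α)) (hGk : ∀ e ∈ G, e.card = k)
    (hdeg : ∀ e : Finset α, e.card = k - 1 →
      ε * (Fintype.card α : ℝ) ≤ ((nbhd G e).card : ℝ))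
    (S : Finset (Finset α)) (hS : S ⊆ Finset.univ.powersetCard (k - 1))
    (hSne : S.Nonempty) :
    ∃ f : Finset α, f.card = k - 2 ∧
      (S.card : ℝ) * (Nat.choose ⌈ε * (Fintype.card α : ℝ)⌉₊ (k - 2)) /
        (Nat.choose (Fintype.card α) (k - 2)) ≤
      (((backNbhd G k f) ∩ S).card : ℝ) := by
  classical
  set n := Fintype.card α with hn
  obtain ⟨e₀, he₀⟩ := hSne
  have hScard : ∀ e ∈ S, e.card = k - 1 := fun e he =>
    (Finset.mem_powersetCard.mp (hS he)).2
  have hkn : k - 1 ≤ n := by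
    rw [← hScard e₀ he₀]; exact Finset.card_le_univ e₀
  have hk2n : k - 2 ≤ n := le_trans (Nat.sub_le_sub_left (by norm_num) k) hkn
  set F := (Finset.univ : Finset α).powersetCard (k - 2) with hF
  have hFne : F.Nonempty := by
    rw [hF, Finset.powersetCard_nonempty]; simpa using hk2n
  have hFcard : F.card = Nat.choose n (k - 2) := by
    rw [hF, Finset.card_powersetCard, Finset.card_univ]
  -- key double counting
  have hcount : ∀ f, ((backNbhd G k f) ∩ S) =
      S.filter (fun e => ∀ v ∈ f, insert v e ∈ G) := by
    intro f
    ext e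
    simp only [backNbhd, Finset.mem_inter, Finset.mem_filter]
    constructor
    · rintro ⟨⟨-, h⟩, hes⟩; exact ⟨hes, h⟩
    · rintro ⟨hes, h⟩; exact ⟨⟨hS hes, h⟩, hes⟩
  have hswap : ∑ f ∈ F, ((backNbhd G k f) ∩ S).card =
      ∑ e ∈ S, Nat.choose (nbhd G e).card (k - 2) := by
    have : ∀ e ∈ S, (F.filter (fun f => ∀ v ∈ f, insert v e ∈ G)) =
        (nbhd G e).powersetCard (k - 2) := by
      intro e _
      ext f
      simp only [hF, Finset.mem_filter, Finset.mem_powersetCard, nbhd,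
        Finset.subset_iff, Finset.mem_filter, Finset.mem_univ, true_and]
      tauto
    calc ∑ f ∈ F, ((backNbhd G k f) ∩ S).card
        = ∑ f ∈ F, ∑ e ∈ S, if (∀ v ∈ f, insert v e ∈ G) then 1 else 0 := by
          simp only [hcount, Finset.card_filter]
      _ = ∑ e ∈ S, ∑ f ∈ F, if (∀ v ∈ f, insert v e ∈ G) then 1 else 0 :=
          Finset.sum_comm
      _ = ∑ e ∈ S, Nat.choose (nbhd G e).card (k - 2) := by
          refine Finset.sum_congr rfl fun e he => ?_
          rw [← Finset.card_filter, this e he, Finset.card_powersetCard]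
  have hlow : S.card * Nat.choose ⌈ε * (n : ℝ)⌉₊ (k - 2) ≤
      ∑ f ∈ F, ((backNbhd G k f) ∩ S).card := by
    rw [hswap]
    calc S.card * Nat.choose ⌈ε * (n : ℝ)⌉₊ (k - 2)
        = ∑ _e ∈ S, Nat.choose ⌈ε * (n : ℝ)⌉₊ (k - 2) := by
          rw [Finset.sum_const, smul_eq_mul]
      _ ≤ ∑ e ∈ S, Nat.choose (nbhd G e).card (k - 2) := by
          refine Finset.sum_le_sum fun e he => ?_
          refine Nat.choose_le_choose _ (Nat.ceil_le.mpr ?_)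
          exact_mod_cast hdeg e (hScard e he)
  -- averaging
  have hchoosepos : 0 < (Nat.choose n (k - 2) : ℝ) := by
    exact_mod_cast Nat.choose_pos hk2n
  have hsumle : ∑ _f ∈ F, ((S.card : ℝ) * (Nat.choose ⌈ε * (n : ℝ)⌉₊ (k - 2)) /
      (Nat.choose n (k - 2))) ≤ ∑ f ∈ F, (((backNbhd G k f) ∩ S).card : ℝ) := by
    rw [Finset.sum_const, nsmul_eq_mul, hFcard]
    rw [mul_comm, div_mul_cancel₀ _ (ne_of_gt hchoosepos)]
    calc ((S.card : ℝ) * (Nat.choose ⌈ε * (n : ℝ)⌉₊ (k - 2)))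
        = ((S.card * Nat.choose ⌈ε * (n : ℝ)⌉₊ (k - 2) : ℕ) : ℝ) := by push_cast; ring
      _ ≤ ((∑ f ∈ F, ((backNbhd G k f) ∩ S).card : ℕ) : ℝ) := by exact_mod_cast hlow
      _ = ∑ f ∈ F, (((backNbhd G k f) ∩ S).card : ℝ) := by push_cast; rfl
  obtain ⟨f, hfF, hle⟩ := Finset.exists_le_of_sum_le hFne hsumle
  exact ⟨f, (Finset.mem_powersetCard.mp hfF).2, hle⟩
end

section
/- Let k ≥ 3 and consider the tight cycle minus an edge C_{2k−1}^(k)- with vertices labelled (in cyclic tight-cycle order) v_1, v_3, ..., v_{2k−3}, w, v_2, v_4, ..., v_{2k−4}, x, with the missing edge being {w, v_2, v_4, ..., v_{2k−4}, x}. Then: (a) with V_1 = {w, x} and V_2 = {v_1, ..., v_{2k−3}}, every edge of C_{2k−1}^(k)- contains exactly one vertex of V_1; and (b) under the ordering v_1 < v_2 < ... < v_{2k−3} of V_2, both link graphs L(w)[V_2] and L(x)[V_2] are ordered subgraphs of the ordered complete (k−1)-partite (k−1)-graph K_{2<...<2}^(k−1) on 2(k−1) vertices. -/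
open Finset

/-- The tight cycle `C_{2k-1}^(k)` minus the edge which is the window starting at
position `k - 1`.  Its vertices are labelled, in cyclic order,
`v_1, v_3, ..., v_{2k-3}, w, v_2, v_4, ..., v_{2k-4}, x` (positions
`0, ..., k-2` carry `v_1, v_3, ..., v_{2k-3}`; position `k-1` carries `w`;
positions `k, ..., 2k-3` carry `v_2, v_4, ..., v_{2k-4}`; position `2k-2`
carries `x`), so the missing edge is `{w, v_2, v_4, ..., v_{2k-4}, x}`. -/
def C2km1minus (k : ℕ) : Finset (Finset (ZMod (2 * k - 1))) :=
  ((Finset.range (2 * k - 1)).filter fun i => i ≠ k - 1).image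
    fun i : ℕ => tightWindow (2 * k - 1) k (i : ZMod (2 * k - 1))

/-- The position in the cyclic order of the vertex `v_i`, `1 ≤ i ≤ 2k - 3`. -/
def vpos (k i : ℕ) : ZMod (2 * k - 1) :=
  if i % 2 = 1 then (((i - 1) / 2 : ℕ) : ZMod (2 * k - 1))
  else ((k - 1 + i / 2 : ℕ) : ZMod (2 * k - 1))

/-- `e` (a set of indices `i`, standing for vertices `v_i`) is an edge of the link
graph `L(u)[V₂]` of the pivot vertex at position `u` in `C_{2k-1}^(k)-`. -/
def IsLinkEdge (k : ℕ) (u : ZMod (2 * k - 1)) (e : Finset ℕ) : Prop :=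
  e ⊆ Finset.Icc 1 (2 * k - 3) ∧ e.card = k - 1 ∧
    insert u (e.image (vpos k)) ∈ C2km1minus k

lemma val_sub' {n : ℕ} [NeZero n] {x y : ℕ} (hx : x < n) (hy : y < n) :
    ((x : ZMod n) - (y : ZMod n)).val = if y ≤ x then x - y else x + n - y := by
  split_ifs with h
  · have hxy : ((x : ZMod n) - (y : ZMod n)) = ((x - y : ℕ) : ZMod n) := by
      push_cast [h]
      ring
    rw [hxy, ZMod.val_cast_of_lt (by omega)]
  · have hle : y ≤ x + n := by omega
    have hxy : ((x : ZMod n) - (y : ZMod n)) = ((x + n - y : ℕ) : ZMod n) := by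
      push_cast [hle]
      simp [ZMod.natCast_self]
    rw [hxy, ZMod.val_cast_of_lt (by omega)]

lemma mem_tightWindow {k : ℕ} (hk : 3 ≤ k) (i a : ZMod (2 * k - 1)) :
    a ∈ tightWindow (2 * k - 1) k i ↔ (a - i).val < k := by
  haveI : NeZero (2 * k - 1) := ⟨by omega⟩
  unfold tightWindow
  simp only [Finset.mem_image, Finset.mem_range]
  constructor
  · rintro ⟨j, hj, rfl⟩
    rw [add_sub_cancel_left, ZMod.val_cast_of_lt (by omega)]
    exact hj
  · intro h
    refine ⟨(a - i).val, h, ?_⟩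
    rw [ZMod.natCast_val, ZMod.cast_id, add_comm, sub_add_cancel]

lemma no_adj_w {k : ℕ} (hk : 3 ≤ k) {e : Finset ℕ} (he : e ⊆ Finset.Icc 1 (2 * k - 3))
    {i' : ℕ} (hi : i' < 2 * k - 1)
    (hW : insert (((k - 1 : ℕ) : ZMod (2 * k - 1))) (e.image (vpos k))
        = tightWindow (2 * k - 1) k (i' : ZMod (2 * k - 1)))
    {j : ℕ} (hj : j % 2 = 1) (h1 : j ∈ e) (h2 : j + 1 ∈ e) : False := by
  haveI : NeZero (2 * k - 1) := ⟨by omega⟩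
  have hb1 := Finset.mem_Icc.mp (he h1)
  have hb2 := Finset.mem_Icc.mp (he h2)
  have m1 : vpos k j ∈ tightWindow (2 * k - 1) k (i' : ZMod (2 * k - 1)) := by
    rw [← hW]; exact Finset.mem_insert_of_mem (Finset.mem_image_of_mem _ h1)
  have m2 : vpos k (j + 1) ∈ tightWindow (2 * k - 1) k (i' : ZMod (2 * k - 1)) := by
    rw [← hW]; exact Finset.mem_insert_of_mem (Finset.mem_image_of_mem _ h2)
  have m3 : ((k - 1 : ℕ) : ZMod (2 * k - 1)) ∈ tightWindow (2 * k - 1) k (i' : ZMod (2 * k - 1)) := by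
    rw [← hW]; exact Finset.mem_insert_self _ _
  rw [mem_tightWindow hk] at m1 m2 m3
  unfold vpos at m1 m2
  rw [if_pos hj] at m1
  rw [if_neg (by omega)] at m2
  rw [val_sub' (show (j - 1) / 2 < 2 * k - 1 by omega) hi] at m1
  rw [val_sub' (show k - 1 + (j + 1) / 2 < 2 * k - 1 by omega) hi] at m2
  rw [val_sub' (show k - 1 < 2 * k - 1 by omega) hi] at m3
  split_ifs at m1 m2 m3 <;> omega

lemma no_adj_x {k : ℕ} (hk : 3 ≤ k) {e : Finset ℕ} (he : e ⊆ Finset.Icc 1 (2 * k - 3))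
    {i' : ℕ} (hi : i' < 2 * k - 1)
    (hW : insert (((2 * k - 2 : ℕ) : ZMod (2 * k - 1))) (e.image (vpos k))
        = tightWindow (2 * k - 1) k (i' : ZMod (2 * k - 1)))
    {j : ℕ} (hj : j % 2 = 0) (h1 : j ∈ e) (h2 : j + 1 ∈ e) : False := by
  haveI : NeZero (2 * k - 1) := ⟨by omega⟩
  have hb1 := Finset.mem_Icc.mp (he h1)
  have hb2 := Finset.mem_Icc.mp (he h2)
  have m1 : vpos k j ∈ tightWindow (2 * k - 1) k (i' : ZMod (2 * k - 1)) := by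
    rw [← hW]; exact Finset.mem_insert_of_mem (Finset.mem_image_of_mem _ h1)
  have m2 : vpos k (j + 1) ∈ tightWindow (2 * k - 1) k (i' : ZMod (2 * k - 1)) := by
    rw [← hW]; exact Finset.mem_insert_of_mem (Finset.mem_image_of_mem _ h2)
  have m3 : ((2 * k - 2 : ℕ) : ZMod (2 * k - 1)) ∈ tightWindow (2 * k - 1) k (i' : ZMod (2 * k - 1)) := by
    rw [← hW]; exact Finset.mem_insert_self _ _
  rw [mem_tightWindow hk] at m1 m2 m3
  unfold vpos at m1 m2
  rw [if_neg (by omega)] at m1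
  rw [if_pos (by omega)] at m2
  rw [val_sub' (show k - 1 + j / 2 < 2 * k - 1 by omega) hi] at m1
  rw [val_sub' (show (j + 1 - 1) / 2 < 2 * k - 1 by omega) hi] at m2
  rw [val_sub' (show 2 * k - 2 < 2 * k - 1 by omega) hi] at m3
  split_ifs at m1 m2 m3 <;> omega

/-- Claim from the proof of Theorem 1.2 (sufficiency, case `ℓ = 2k - 1`): for the
tight cycle `C_{2k-1}^(k)` minus the edge `{w, v_2, ..., v_{2k-4}, x}`:
(a) with `V₁ = {w, x}` and `V₂ = {v_1, ..., v_{2k-3}}`, every edge contains exactly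
one vertex of `V₁`; and
(b) under the ordering `v_1 < v_2 < ⋯ < v_{2k-3}`, both link graphs `L(w)[V₂]` and
`L(x)[V₂]` are ordered subgraphs of the ordered complete `(k-1)`-partite
`(k-1)`-graph `K_{2<⋯<2}^(k-1)` on the `2(k-1)` vertices `{0, 1, ..., 2k-3}`
(consecutive blocks `{2r, 2r+1}` of size `2`; a `(k-1)`-set is an edge iff it meets
every block in exactly one vertex, i.e. the values `u / 2` are pairwise distinct). -/
theorem C2km1_minus_partite_and_links (k : ℕ) (hk : 3 ≤ k) :
    (∀ e ∈ C2km1minus k,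
      (e ∩ {((k - 1 : ℕ) : ZMod (2 * k - 1)), ((2 * k - 2 : ℕ) : ZMod (2 * k - 1))}).card
        = 1) ∧
    (∀ u ∈ ({((k - 1 : ℕ) : ZMod (2 * k - 1)), ((2 * k - 2 : ℕ) : ZMod (2 * k - 1))} :
        Finset (ZMod (2 * k - 1))),
      ∃ φ : ℕ → ℕ, StrictMonoOn φ (Set.Icc 1 (2 * k - 3)) ∧
        (∀ i ∈ Set.Icc 1 (2 * k - 3), φ i < 2 * (k - 1)) ∧
        (∀ e : Finset ℕ, IsLinkEdge k u e →
          ((e.image φ).image fun v => v / 2).card = k - 1)) := by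
  haveI : NeZero (2 * k - 1) := ⟨by omega⟩
  constructor
  · intro e hee
    simp only [C2km1minus, Finset.mem_image, Finset.mem_filter, Finset.mem_range] at hee
    obtain ⟨i', ⟨hi1, hi2⟩, rfl⟩ := hee
    have ha : ((k - 1 : ℕ) : ZMod (2 * k - 1)) ∈ tightWindow (2 * k - 1) k (i' : ZMod (2 * k - 1))
        ↔ i' ≤ k - 2 := by
      rw [mem_tightWindow hk, val_sub' (show k - 1 < 2 * k - 1 by omega) hi1]
      split_ifs <;> omega
    have hb : ((2 * k - 2 : ℕ) : ZMod (2 * k - 1)) ∈ tightWindow (2 * k - 1) k (i' : ZMod (2 * k - 1))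
        ↔ k ≤ i' := by
      rw [mem_tightWindow hk, val_sub' (show 2 * k - 2 < 2 * k - 1 by omega) hi1]
      split_ifs <;> omega
    rcases (show i' ≤ k - 2 ∨ k ≤ i' by omega) with hc | hc
    · have hA := ha.mpr hc
      have hB : ((2 * k - 2 : ℕ) : ZMod (2 * k - 1)) ∉ tightWindow (2 * k - 1) k (i' : ZMod (2 * k - 1)) := by
        intro h; exact absurd (hb.mp h) (by omega)
      have heq : tightWindow (2 * k - 1) k (i' : ZMod (2 * k - 1)) ∩
          {((k - 1 : ℕ) : ZMod (2 * k - 1)), ((2 * k - 2 : ℕ) : ZMod (2 * k - 1))}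
          = {((k - 1 : ℕ) : ZMod (2 * k - 1))} := by
        ext x
        simp only [Finset.mem_inter, Finset.mem_insert, Finset.mem_singleton]
        constructor
        · rintro ⟨hx, h | h⟩
          · exact h
          · exact absurd (h ▸ hx) hB
        · rintro rfl
          exact ⟨hA, Or.inl rfl⟩
      rw [heq, Finset.card_singleton]
    · have hB := hb.mpr hc
      have hA : ((k - 1 : ℕ) : ZMod (2 * k - 1)) ∉ tightWindow (2 * k - 1) k (i' : ZMod (2 * k - 1)) := by
        intro h; exact absurd (ha.mp h) (by omega)
      have heq : tightWindow (2 * k - 1) k (i' : ZMod (2 * k - 1)) ∩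
          {((k - 1 : ℕ) : ZMod (2 * k - 1)), ((2 * k - 2 : ℕ) : ZMod (2 * k - 1))}
          = {((2 * k - 2 : ℕ) : ZMod (2 * k - 1))} := by
        ext x
        simp only [Finset.mem_inter, Finset.mem_insert, Finset.mem_singleton]
        constructor
        · rintro ⟨hx, h | h⟩
          · exact absurd (h ▸ hx) hA
          · exact h
        · rintro rfl
          exact ⟨hB, Or.inr rfl⟩
      rw [heq, Finset.card_singleton]
  · intro u hu
    simp only [Finset.mem_insert, Finset.mem_singleton] at hu
    rcases hu with rfl | rfl
    · refine ⟨fun j => j - 1, ?_, ?_, ?_⟩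
      · intro a ha b hb hab
        simp only [Set.mem_Icc] at ha hb
        show a - 1 < b - 1
        omega
      · intro i hi
        simp only [Set.mem_Icc] at hi
        show i - 1 < 2 * (k - 1)
        omega
      · rintro e ⟨hsub, hcard, hmem⟩
        simp only [C2km1minus, Finset.mem_image, Finset.mem_filter, Finset.mem_range] at hmem
        obtain ⟨i', ⟨hi1, hi2⟩, hW⟩ := hmem
        rw [Finset.image_image, Finset.card_image_of_injOn, hcard]
        intro j1 hj1 j2 hj2 heq
        simp only [Finset.mem_coe] at hj1 hj2
        by_contra hne
        simp only [Function.comp_apply] at heq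
        have b1 := Finset.mem_Icc.mp (hsub hj1)
        have b2 := Finset.mem_Icc.mp (hsub hj2)
        have hd : (j2 = j1 + 1 ∧ j1 % 2 = 1) ∨ (j1 = j2 + 1 ∧ j2 % 2 = 1) := by omega
        rcases hd with ⟨h, ho⟩ | ⟨h, ho⟩
        · exact no_adj_w hk hsub hi1 hW.symm ho hj1 (h ▸ hj2)
        · exact no_adj_w hk hsub hi1 hW.symm ho hj2 (h ▸ hj1)
    · refine ⟨fun j => if j = 1 then 0 else j, ?_, ?_, ?_⟩
      · intro a ha b hb hab
        simp only [Set.mem_Icc] at ha hb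
        show (if a = 1 then 0 else a) < (if b = 1 then 0 else b)
        split_ifs <;> omega
      · intro i hi
        simp only [Set.mem_Icc] at hi
        show (if i = 1 then 0 else i) < 2 * (k - 1)
        split_ifs <;> omega
      · rintro e ⟨hsub, hcard, hmem⟩
        simp only [C2km1minus, Finset.mem_image, Finset.mem_filter, Finset.mem_range] at hmem
        obtain ⟨i', ⟨hi1, hi2⟩, hW⟩ := hmem
        rw [Finset.image_image, Finset.card_image_of_injOn, hcard]
        intro j1 hj1 j2 hj2 heq
        simp only [Finset.mem_coe] at hj1 hj2
        by_contra hne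
        simp only [Function.comp_apply] at heq
        have b1 := Finset.mem_Icc.mp (hsub hj1)
        have b2 := Finset.mem_Icc.mp (hsub hj2)
        have hd : (j2 = j1 + 1 ∧ j1 % 2 = 0) ∨ (j1 = j2 + 1 ∧ j2 % 2 = 0) := by
          split_ifs at heq <;> omega
        rcases hd with ⟨h, ho⟩ | ⟨h, ho⟩
        · exact no_adj_x hk hsub hi1 hW.symm ho hj1 (h ▸ hj2)
        · exact no_adj_x hk hsub hi1 hW.symm ho hj2 (h ▸ hj1)
end
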